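/- Let μ > 1 be real, let 0 < ε ≤ 1/2, and set r_n = (μⁿ − 1)/(μⁿ + 1) for natural numbers n. Let w : [−π, π] → [0, ∞] be measurable with ∫_{−π}^{π} w(θ)/|θ|^{1+2ε} dθ < ∞. Then there exists a constant C ≥ 0 such that for every natural number n, ∫_{−π}^{π} w(θ) · (1 − r_n²)/(1 − 2 r_n cos θ + r_n²) dθ ≤ C · μ^{−2nε}. (Applied to w = |f|², this says ‖f∘φ_μ^{∘n}‖_{H²} = O(μ^{−nε}) whenever f ∈ (z−1)^{1/2+ε}H².) -/

import Mathlib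

/-!
The Poisson kernel at radius `ρ = 1 - δ` is at most `2 / δ` everywhere and at most
`2π² δ / θ²` on `[-π, π]`. Using the first bound for `|θ| ≤ δ` and the second for `|θ| > δ`
gives `P_ρ(θ) ≤ 2π² δ^s / |θ|^(1+s)` for every `|s| ≤ 1`. Integrating against `w` with
`s = 2ε`, and using `1 - r_n = 2 / (μⁿ + 1) ≤ 2 μ⁻ⁿ`, yields the decay `O(μ^(-2nε))`.
-/

open MeasureTheory ENNReal Real

noncomputable def diskPoissonKernel (ρ θ : ℝ) : ℝ :=
  (1 - ρ ^ 2) / (1 - 2 * ρ * cos θ + ρ ^ 2)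

section PoissonKernel

variable {ρ θ : ℝ}

lemma diskPoissonKernel_denom_eq (ρ θ : ℝ) :
    1 - 2 * ρ * cos θ + ρ ^ 2 = (1 - ρ) ^ 2 + 2 * ρ * (1 - cos θ) := by
  ring

lemma sq_one_sub_le_diskPoissonKernel_denom (hρ : 0 ≤ ρ) :
    (1 - ρ) ^ 2 ≤ 1 - 2 * ρ * cos θ + ρ ^ 2 := by
  rw [diskPoissonKernel_denom_eq]
  have := mul_nonneg hρ (sub_nonneg.mpr (cos_le_one θ))
  linarith

lemma sq_div_pi_sq_le_diskPoissonKernel_denom (hρ : 0 ≤ ρ) (hθ : |θ| ≤ π) :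
    θ ^ 2 / π ^ 2 ≤ 1 - 2 * ρ * cos θ + ρ ^ 2 := by
  have hθπ : θ ^ 2 / π ^ 2 ≤ 1 := by
    rw [div_le_one (by positivity), ← sq_abs]
    exact pow_le_pow_left₀ (abs_nonneg θ) hθ 2
  have hcos : 2 * (θ ^ 2 / π ^ 2) ≤ 1 - cos θ := by
    linarith [cos_le_one_sub_mul_cos_sq hθ, show 2 / π ^ 2 * θ ^ 2 = 2 * (θ ^ 2 / π ^ 2) by ring]
  -- `(1 - ρ)² + 4ρ θ²/π² ≥ (1 + ρ)² θ²/π² ≥ θ²/π²`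
  rw [diskPoissonKernel_denom_eq]
  nlinarith [mul_le_mul_of_nonneg_left hcos hρ, mul_le_mul_of_nonneg_left hθπ (sq_nonneg (1 - ρ)),
    mul_nonneg (mul_nonneg hρ (by positivity : (0 : ℝ) ≤ 2 + ρ)) (by positivity : 0 ≤ θ ^ 2 / π ^ 2)]

lemma diskPoissonKernel_le_two_div (hρ₀ : 0 ≤ ρ) (hρ₁ : ρ < 1) :
    diskPoissonKernel ρ θ ≤ 2 / (1 - ρ) := by
  have hδ : 0 < 1 - ρ := by linarith
  calc diskPoissonKernel ρ θ ≤ 2 * (1 - ρ) / (1 - ρ) ^ 2 :=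
        div_le_div₀ (by positivity) (by nlinarith) (by positivity)
          (sq_one_sub_le_diskPoissonKernel_denom hρ₀)
    _ = 2 / (1 - ρ) := by field_simp

lemma diskPoissonKernel_le_mul_div_sq (hρ₀ : 0 ≤ ρ) (hρ₁ : ρ < 1) (hθ₀ : θ ≠ 0) (hθ : |θ| ≤ π) :
    diskPoissonKernel ρ θ ≤ 2 * π ^ 2 * (1 - ρ) / θ ^ 2 := by
  have hδ : 0 < 1 - ρ := by linarith
  calc diskPoissonKernel ρ θ ≤ 2 * (1 - ρ) / (θ ^ 2 / π ^ 2) :=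
        div_le_div₀ (by positivity) (by nlinarith) (by positivity)
          (sq_div_pi_sq_le_diskPoissonKernel_denom hρ₀ hθ)
    _ = 2 * π ^ 2 * (1 - ρ) / θ ^ 2 := by field_simp

lemma diskPoissonKernel_le_rpow_div_rpow {s : ℝ} (hs : |s| ≤ 1) (hρ₀ : 0 ≤ ρ) (hρ₁ : ρ < 1)
    (hθ₀ : θ ≠ 0) (hθ : |θ| ≤ π) :
    diskPoissonKernel ρ θ ≤ 2 * π ^ 2 * (1 - ρ) ^ s / |θ| ^ (1 + s) := by
  obtain ⟨hs₀, hs₁⟩ := abs_le.mp hs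
  set δ := 1 - ρ
  have hδ : 0 < δ := by linarith
  have ht : 0 < |θ| := abs_pos.mpr hθ₀
  rcases le_or_gt |θ| δ with hθδ | hδθ
  · calc diskPoissonKernel ρ θ ≤ 2 / δ := diskPoissonKernel_le_two_div hρ₀ hρ₁
      _ = 2 * δ ^ s / δ ^ (1 + s) := by
          rw [rpow_add hδ, Real.rpow_one]; field_simp
      _ ≤ 2 * δ ^ s / |θ| ^ (1 + s) := by
          gcongr; linarith
      _ ≤ 2 * π ^ 2 * δ ^ s / |θ| ^ (1 + s) := by
          gcongr
          nlinarith [pi_gt_three]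
  · calc diskPoissonKernel ρ θ ≤ 2 * π ^ 2 * δ / θ ^ 2 :=
          diskPoissonKernel_le_mul_div_sq hρ₀ hρ₁ hθ₀ hθ
      _ = 2 * π ^ 2 * δ ^ s * δ ^ (1 - s) / |θ| ^ 2 := by
          rw [mul_assoc _ (δ ^ s), ← rpow_add hδ, add_sub_cancel, Real.rpow_one, sq_abs]
      _ ≤ 2 * π ^ 2 * δ ^ s * |θ| ^ (1 - s) / |θ| ^ 2 := by
          gcongr
      _ = 2 * π ^ 2 * δ ^ s / |θ| ^ (1 + s) := by
          have : |θ| ^ 2 = |θ| ^ (1 - s) * |θ| ^ (1 + s) := by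
            rw [← rpow_add ht, ← Real.rpow_natCast]; norm_num
          rw [this]
          field_simp

end PoissonKernel

lemma lintegral_mul_diskPoissonKernel_le (w : ℝ → ℝ≥0∞) {ρ s : ℝ} (hs : |s| ≤ 1) (hρ₀ : 0 ≤ ρ)
    (hρ₁ : ρ < 1) :
    ∫⁻ θ in Set.Icc (-π) π, w θ * ENNReal.ofReal (diskPoissonKernel ρ θ) ≤
      ENNReal.ofReal (2 * π ^ 2 * (1 - ρ) ^ s) *
        ∫⁻ θ in Set.Icc (-π) π, w θ / ENNReal.ofReal (|θ| ^ (1 + s)) := by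
  rw [← lintegral_const_mul' _ _ ofReal_ne_top]
  refine lintegral_mono_ae ?_
  filter_upwards [ae_restrict_mem measurableSet_Icc, Measure.ae_ne _ 0] with θ hθ hθ₀
  have ht : 0 < |θ| ^ (1 + s) := rpow_pos_of_pos (abs_pos.mpr hθ₀) _
  calc w θ * ENNReal.ofReal (diskPoissonKernel ρ θ)
      ≤ w θ * ENNReal.ofReal (2 * π ^ 2 * (1 - ρ) ^ s / |θ| ^ (1 + s)) := by
        gcongr
        exact diskPoissonKernel_le_rpow_div_rpow hs hρ₀ hρ₁ hθ₀ (abs_le.mpr hθ)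
    _ = ENNReal.ofReal (2 * π ^ 2 * (1 - ρ) ^ s) * (w θ / ENNReal.ofReal (|θ| ^ (1 + s))) := by
        rw [ofReal_div_of_pos ht, div_eq_mul_inv, div_eq_mul_inv]
        ring

lemma one_sub_div_add_one_rpow_le {μ s : ℝ} (hμ : 0 < μ) (hs : 0 ≤ s) (n : ℕ) :
    (1 - (μ ^ n - 1) / (μ ^ n + 1)) ^ s ≤ 2 ^ s * μ ^ (-(n : ℝ) * s) := by
  have hm : 0 < μ ^ n := pow_pos hμ n
  have hsub : 1 - (μ ^ n - 1) / (μ ^ n + 1) = 2 / (μ ^ n + 1) := by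
    field_simp; ring
  calc (1 - (μ ^ n - 1) / (μ ^ n + 1)) ^ s ≤ (2 / μ ^ n) ^ s := by
        rw [hsub]; gcongr; linarith
    _ = 2 ^ s * μ ^ (-(n : ℝ) * s) := by
        rw [div_rpow zero_le_two hm.le, Real.rpow_mul hμ.le, Real.rpow_neg hμ.le,
          Real.inv_rpow (by positivity), Real.rpow_natCast, div_eq_mul_inv]

theorem weighted_poisson_integral_decay_general
    (μ : ℝ) (hμ : 1 < μ) (ε : ℝ) (hε0 : 0 < ε) (hε : ε ≤ 1 / 2)
    (r : ℕ → ℝ) (hr : ∀ n : ℕ, r n = (μ ^ n - 1) / (μ ^ n + 1))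
    (w : ℝ → ℝ≥0∞)
    (hint : (∫⁻ θ in Set.Icc (-Real.pi) Real.pi,
        w θ / ENNReal.ofReal (|θ| ^ (1 + 2 * ε))) ≠ ⊤) :
    ∃ C : ℝ, 0 ≤ C ∧ ∀ n : ℕ,
      (∫⁻ θ in Set.Icc (-Real.pi) Real.pi,
          w θ * ENNReal.ofReal ((1 - r n ^ 2) / (1 - 2 * r n * Real.cos θ + r n ^ 2)))
        ≤ ENNReal.ofReal (C * μ ^ (-2 * (n : ℝ) * ε)) := by
  set I := ∫⁻ θ in Set.Icc (-π) π, w θ / ENNReal.ofReal (|θ| ^ (1 + 2 * ε))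
  refine ⟨2 * π ^ 2 * 2 ^ (2 * ε) * I.toReal, by positivity, fun n => ?_⟩
  have hs : |2 * ε| ≤ 1 := abs_le.mpr ⟨by linarith, by linarith⟩
  have hr₀ : 0 ≤ r n := by
    rw [hr]; exact div_nonneg (by simp [one_le_pow₀ hμ.le]) (by positivity)
  have hr₁ : r n < 1 := by
    rw [hr, div_lt_one (by positivity)]; linarith
  have hdecay : (1 - r n) ^ (2 * ε) ≤ 2 ^ (2 * ε) * μ ^ (-2 * (n : ℝ) * ε) := by
    rw [hr, show -2 * (n : ℝ) * ε = -(n : ℝ) * (2 * ε) by ring]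
    exact one_sub_div_add_one_rpow_le (by linarith) (by linarith) n
  calc _ ≤ ENNReal.ofReal (2 * π ^ 2 * (1 - r n) ^ (2 * ε)) * I :=
        lintegral_mul_diskPoissonKernel_le w hs hr₀ hr₁
    _ ≤ ENNReal.ofReal (2 * π ^ 2 * (2 ^ (2 * ε) * μ ^ (-2 * (n : ℝ) * ε))) * I := by
        gcongr
    _ = ENNReal.ofReal (2 * π ^ 2 * 2 ^ (2 * ε) * I.toReal * μ ^ (-2 * (n : ℝ) * ε)) := by
        rw [mul_right_comm _ I.toReal, mul_assoc (2 * π ^ 2),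
          ofReal_mul (q := I.toReal) (by positivity), ofReal_toReal hint]

/-- Let `μ > 1`, `0 < ε ≤ 1/2`, `r_n = (μⁿ-1)/(μⁿ+1)`, and let
`w : [-π,π] → [0,∞]` be measurable with `∫_{-π}^{π} w(θ)/|θ|^{1+2ε} dθ < ∞`. Then there
is a constant `C ≥ 0` with `∫_{-π}^{π} w(θ)·P_{r_n}(e^{iθ}) dθ ≤ C·μ^{-2nε}` for all `n`.
(For `w = |f|²` this says `‖f∘φ_μ^[n]‖ = O(μ^{-nε})` when `f ∈ (z-1)^{1/2+ε}H²`.) -/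
theorem weighted_poisson_integral_decay
    (μ : ℝ) (hμ : 1 < μ) (ε : ℝ) (hε0 : 0 < ε) (hε : ε ≤ 1 / 2)
    (r : ℕ → ℝ) (hr : ∀ n : ℕ, r n = (μ ^ n - 1) / (μ ^ n + 1))
    (w : ℝ → ℝ≥0∞) (hw : Measurable w)
    (hint : (∫⁻ θ in Set.Icc (-Real.pi) Real.pi,
        w θ / ENNReal.ofReal (|θ| ^ (1 + 2 * ε))) ≠ ⊤) :
    ∃ C : ℝ, 0 ≤ C ∧ ∀ n : ℕ,
      (∫⁻ θ in Set.Icc (-Real.pi) Real.pi,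
          w θ * ENNReal.ofReal ((1 - r n ^ 2) / (1 - 2 * r n * Real.cos θ + r n ^ 2)))
        ≤ ENNReal.ofReal (C * μ ^ (-2 * (n : ℝ) * ε)) :=
  weighted_poisson_integral_decay_general μ hμ ε hε0 hε r hr w hint
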